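/- If r is a square root on a pseudo MV-algebra M, then r(x) ≤ (x ⊕ r(0)) ∧ (r(0) ⊕ x) for all x ∈ M. -/

import Mathlib

/-- A pseudo MV-algebra `(M; ⊕, ⁻, ∼, 0, 1)` satisfying axioms (A1)–(A8),
with `x ⊙ y := (y⁻ ⊕ x⁻)∼`. -/
class PseudoMV (M : Type*) where
  oplus : M → M → M
  lneg : M → M
  rneg : M → M
  zero : M
  one : M
  oplus_assoc : ∀ x y z : M, oplus x (oplus y z) = oplus (oplus x y) z
  oplus_zero : ∀ x : M, oplus x zero = x
  zero_oplus : ∀ x : M, oplus zero x = x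
  oplus_one : ∀ x : M, oplus x one = one
  one_oplus : ∀ x : M, oplus one x = one
  lneg_one : lneg one = zero
  rneg_one : rneg one = zero
  a5 : ∀ x y : M, rneg (oplus (lneg x) (lneg y)) = lneg (oplus (rneg x) (rneg y))
  a6₁ : ∀ x y : M,
    oplus x (rneg (oplus (lneg y) (lneg (rneg x)))) =
      oplus y (rneg (oplus (lneg x) (lneg (rneg y))))
  a6₂ : ∀ x y : M,
    oplus x (rneg (oplus (lneg y) (lneg (rneg x)))) =
      oplus (rneg (oplus (lneg (lneg y)) (lneg x))) y
  a6₃ : ∀ x y : M,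
    oplus x (rneg (oplus (lneg y) (lneg (rneg x)))) =
      oplus (rneg (oplus (lneg (lneg x)) (lneg y))) x
  a7 : ∀ x y : M,
    rneg (oplus (lneg (oplus (lneg x) y)) (lneg x)) =
      rneg (oplus (lneg y) (lneg (oplus x (rneg y))))
  a8 : ∀ x : M, rneg (lneg x) = x

namespace PseudoMV

variable {M : Type*} [PseudoMV M]

/-- `x ⊙ y := (y⁻ ⊕ x⁻)∼`. -/
def mul (x y : M) : M := rneg (oplus (lneg y) (lneg x))

/-- `x ∨ y = x ⊕ (x∼ ⊙ y)` (axiom (A6)). -/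
def sup (x y : M) : M := oplus x (mul (rneg x) y)

/-- `x ∧ y = x ⊙ (x⁻ ⊕ y)` (axiom (A7)). -/
def inf (x y : M) : M := mul x (oplus (lneg x) y)

/-- The lattice order of a pseudo MV-algebra. -/
def le (x y : M) : Prop := sup x y = y

/-- `x → y := x⁻ ⊕ y`. -/
def arrow (x y : M) : M := oplus (lneg x) y

/-- `x ⇝ y := y ⊕ x∼`. -/
def squig (x y : M) : M := oplus y (rneg x)

/-- A weak square root: (Sq1) and (Sq2). -/
def IsWeakSqrt (r : M → M) : Prop :=
  (∀ x : M, mul (r x) (r x) = x) ∧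
  (∀ x y : M, le (mul y y) x → le y (r x))

/-- A square root: (Sq1), (Sq2) and (Sq3). -/
def IsSqrt (r : M → M) : Prop :=
  IsWeakSqrt r ∧
  (∀ x : M, r (lneg x) = arrow (r x) (r zero) ∧ r (rneg x) = squig (r x) (r zero))

end PseudoMV

/-!
Write `a := r x`, so that `x = a ⊙ a`. The element `d := a⁻ ⊕ x` lies above both `a` and `a⁻`,
hence `d ⊕ d ≥ a⁻ ⊕ a = 1`. Then `d∼ ⊙ d∼ = (d ⊕ d)∼ = 0`, so (Sq2) gives `d∼ ≤ r 0`, that is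
`a⁻ ⊕ x ⊕ r 0 = 1`, which says `a ≤ x ⊕ r 0`. The mirror argument with `x ⊕ a∼` gives
`a ≤ r 0 ⊕ x`, and `a` lies below the meet of two upper bounds by (A7).
-/

namespace PseudoMV

variable {M : Type*} [PseudoMV M]

lemma lneg_rneg (x : M) : lneg (rneg x) = x := by
  simpa only [lneg_one, rneg_one, oplus_zero, a8] using (a5 x (one : M)).symm

lemma mul_eq_lneg (x y : M) : mul x y = lneg (oplus (rneg y) (rneg x)) := a5 y x

lemma mul_lneg_self (x : M) : mul (lneg x) (lneg x) = lneg (oplus x x) := by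
  rw [mul_eq_lneg, a8]

lemma mul_rneg_self (x : M) : mul (rneg x) (rneg x) = rneg (oplus x x) := by
  rw [mul, lneg_rneg]

lemma oplus_rneg_self (x : M) : oplus x (rneg x) = one := by
  simpa only [lneg_one, zero_oplus, a8, one_oplus] using a6₁ x (one : M)

lemma lneg_oplus_self (x : M) : oplus (lneg x) x = one := by
  simpa only [lneg_one, zero_oplus, oplus_zero, a8, oplus_rneg_self] using (a6₃ x (one : M)).symm

lemma le_iff_lneg_oplus_eq_one {x y : M} : le x y ↔ oplus (lneg x) y = one := by
  constructor
  · intro h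
    rw [← show oplus x (mul (rneg x) y) = y from h, oplus_assoc, lneg_oplus_self, one_oplus]
  · intro h
    show oplus x (rneg (oplus (lneg y) (lneg (rneg x)))) = y
    rw [a6₁ x y, lneg_rneg, h, rneg_one, oplus_zero]

lemma le_iff_oplus_rneg_eq_one {x y : M} : le x y ↔ oplus y (rneg x) = one := by
  have hsup : sup x y = oplus (rneg (oplus (lneg (lneg x)) (lneg y))) x := a6₃ x y
  constructor
  · intro h
    rw [← show sup x y = y from h, hsup, ← oplus_assoc, oplus_rneg_self, oplus_one]
  · intro h
    show sup x y = y
    rw [sup, mul, a6₂ x y, a5 (lneg y) x, a8, h, lneg_one, zero_oplus]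

protected lemma le_refl (x : M) : le x x :=
  le_iff_lneg_oplus_eq_one.mpr (lneg_oplus_self x)

protected lemma le_trans {x y z : M} (hxy : le x y) (hyz : le y z) : le x z := by
  apply le_iff_lneg_oplus_eq_one.mpr
  rw [← show oplus y (mul (rneg y) z) = z from hyz, oplus_assoc,
    le_iff_lneg_oplus_eq_one.mp hxy, one_oplus]

lemma eq_one_of_one_le {x : M} (h : le one x) : x = one := by
  simpa only [lneg_one, zero_oplus] using le_iff_lneg_oplus_eq_one.mp h

lemma le_oplus_right (x y : M) : le x (oplus x y) := by
  rw [le_iff_lneg_oplus_eq_one, oplus_assoc, lneg_oplus_self, one_oplus]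

lemma le_oplus_left (x y : M) : le x (oplus y x) := by
  rw [le_iff_oplus_rneg_eq_one, ← oplus_assoc, oplus_rneg_self, oplus_one]

lemma oplus_le_oplus_left (t : M) {x y : M} (h : le x y) : le (oplus t x) (oplus t y) := by
  rw [← show oplus x (mul (rneg x) y) = y from h, oplus_assoc]
  exact le_oplus_right _ _

lemma oplus_le_oplus_right (t : M) {x y : M} (h : le x y) : le (oplus x t) (oplus y t) := by
  rw [← show oplus (rneg (oplus (lneg (lneg x)) (lneg y))) x = y from (a6₃ x y).symm.trans h,
    ← oplus_assoc]
  exact le_oplus_left _ _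

lemma oplus_le_oplus {x y z w : M} (hxy : le x y) (hzw : le z w) :
    le (oplus x z) (oplus y w) :=
  PseudoMV.le_trans (oplus_le_oplus_right z hxy) (oplus_le_oplus_left y hzw)

lemma lneg_le_lneg {x y : M} (h : le x y) : le (lneg y) (lneg x) := by
  rw [le_iff_oplus_rneg_eq_one, a8]
  exact le_iff_lneg_oplus_eq_one.mp h

lemma rneg_le_rneg {x y : M} (h : le x y) : le (rneg y) (rneg x) := by
  rw [le_iff_lneg_oplus_eq_one, lneg_rneg]
  exact le_iff_oplus_rneg_eq_one.mp h

protected lemma mul_le_mul_left (t : M) {x y : M} (h : le x y) : le (mul t x) (mul t y) :=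
  rneg_le_rneg (oplus_le_oplus_right (lneg t) (lneg_le_lneg h))

lemma inf_eq_of_le {x y : M} (h : le x y) : inf y x = x := by
  have h7 := a7 y x
  rwa [le_iff_oplus_rneg_eq_one.mp h, lneg_one, oplus_zero, a8] at h7

protected lemma le_inf {x y z : M} (hy : le x y) (hz : le x z) : le x (inf y z) := by
  rw [← inf_eq_of_le hy]
  exact PseudoMV.mul_le_mul_left y (oplus_le_oplus_left (lneg y) hz)

lemma oplus_self_eq_one_of_le_of_lneg_le {a d : M} (h : le a d) (h' : le (lneg a) d) :
    oplus d d = one :=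
  eq_one_of_one_le (lneg_oplus_self a ▸ oplus_le_oplus h' h)

lemma oplus_self_eq_one_of_le_of_rneg_le {a d : M} (h : le a d) (h' : le (rneg a) d) :
    oplus d d = one :=
  eq_one_of_one_le (oplus_rneg_self a ▸ oplus_le_oplus h h')

lemma lneg_oplus_mul_self_oplus_self (a : M) :
    oplus (oplus (lneg a) (mul a a)) (oplus (lneg a) (mul a a)) = one :=
  oplus_self_eq_one_of_le_of_lneg_le
    (by rw [le_iff_lneg_oplus_eq_one, oplus_assoc, mul, oplus_rneg_self]) (le_oplus_right _ _)

lemma mul_self_oplus_rneg_oplus_self (a : M) :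
    oplus (oplus (mul a a) (rneg a)) (oplus (mul a a) (rneg a)) = one :=
  oplus_self_eq_one_of_le_of_rneg_le
    (by rw [le_iff_oplus_rneg_eq_one, ← oplus_assoc, mul_eq_lneg, lneg_oplus_self])
    (le_oplus_left _ _)

namespace IsWeakSqrt

variable {r : M → M}

lemma le_sqrt_zero_of_mul_self_eq_zero (hr : IsWeakSqrt r) {y : M} (hy : mul y y = zero) :
    le y (r zero) :=
  hr.2 zero y (by rw [hy]; exact PseudoMV.le_refl zero)

lemma le_oplus_sqrt_zero (hr : IsWeakSqrt r) (x : M) : le (r x) (oplus x (r zero)) := by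
  have hdd := lneg_oplus_mul_self_oplus_self (r x)
  rw [hr.1 x] at hdd
  have hd : le (rneg (oplus (lneg (r x)) x)) (r zero) :=
    hr.le_sqrt_zero_of_mul_self_eq_zero (by rw [mul_rneg_self, hdd, rneg_one])
  rw [le_iff_lneg_oplus_eq_one, lneg_rneg] at hd
  rwa [le_iff_lneg_oplus_eq_one, oplus_assoc]

lemma le_sqrt_zero_oplus (hr : IsWeakSqrt r) (x : M) : le (r x) (oplus (r zero) x) := by
  have hdd := mul_self_oplus_rneg_oplus_self (r x)
  rw [hr.1 x] at hdd
  have hd : le (lneg (oplus x (rneg (r x)))) (r zero) :=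
    hr.le_sqrt_zero_of_mul_self_eq_zero (by rw [mul_lneg_self, hdd, lneg_one])
  rw [le_iff_oplus_rneg_eq_one, a8] at hd
  rwa [le_iff_oplus_rneg_eq_one, ← oplus_assoc]

end IsWeakSqrt

end PseudoMV

open PseudoMV

theorem stmt8 {M : Type*} [PseudoMV M] (r : M → M) (hr : IsSqrt r) :
    ∀ x : M, le (r x) (inf (oplus x (r zero)) (oplus (r zero) x)) := fun x =>
  PseudoMV.le_inf (hr.1.le_oplus_sqrt_zero x) (hr.1.le_sqrt_zero_oplus x)
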